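/- For every integer n > 4 and every strictly increasing function g : ℝ → ℝ with g(0) = 0 and g nonnegative on [0,∞), the following holds. Let V = {1,…,n} and distinguish vertices a = 1, b = 2. Define a joint distribution: C ~ Bernoulli(1/2); conditionally on C = c ∈ {0,1}, the edge indicators E_{u,v} (for unordered pairs {u,v}) are independent Bernoulli with P(E_{a,b} = 1 | C=c) = (1 + (2c-1)/2)/2, P(E_{u,v} = 1 | C=c) = (1 + (2c-1)/4)/2 whenever exactly one of u, v lies in {a,b}, and P(E_{u,v} = 1 | C=c) = 1/2 for all other pairs. Set the edge cost c(u,v) = g( I(E_{u,v}; C) ) and let ρ0 be the uniform distribution on V. Then: (i) I(E_{a,b}; C) = log 2 - h(3/4) > 0, and for pairs {u,v} disjoint from {a,b}, I((E_{u,v}); C) = 0; (ii) there exist a 2-element set S0 ⊆ V disjoint from {a,b} and a flow J0 (J0 ≥ 0 entrywise) whose result is supported on S0 with cost W(J0) ≤ (2/n)·g(log 2 - h(5/8)); (iii) every flow whose result is supported on {a,b} has cost at least ((n-2)/n)·g(log 2 - h(5/8)), which is strictly greater than (2/n)·g(log 2 - h(5/8)). Consequently there exist flows f0, f1 with results H0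 (induced on S0) and H1 (induced on {a,b}) such that W(f0) < W(f1) while I(H0; C) = 0 < I(H1; C); i.e., the parameter pair (c, ρ0) is not information monotone for this data distribution. -/
import Mathlib


/-- The binary entropy function `h(x) = -x log x - (1-x) log(1-x)` (natural log,
convention `0 · log 0 = 0`). -/
noncomputable def binEntropy (x : ℝ) : ℝ :=
  -x * Real.log x - (1 - x) * Real.log (1 - x)

/-- Shannon mutual information `I(X; Y)` of two finitely-valued random variables on a
finite sample space `Ω` equipped with a probability mass function `p`:
`I(X;Y) = Σ_{a,b} P(X=a, Y=b) · log( P(X=a, Y=b) / (P(X=a) · P(Y=b)) )`,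
with natural logarithm and the convention `0 · log 0 = 0`. -/
noncomputable def miRV {Ω α β : Type*} [Fintype Ω] [Fintype α] [Fintype β]
    [DecidableEq α] [DecidableEq β] (p : Ω → ℝ) (X : Ω → α) (Y : Ω → β) : ℝ :=
  ∑ a : α, ∑ b : β,
    (∑ ω ∈ Finset.univ.filter fun ω => X ω = a ∧ Y ω = b, p ω) *
      Real.log ((∑ ω ∈ Finset.univ.filter fun ω => X ω = a ∧ Y ω = b, p ω) /
        ((∑ ω ∈ Finset.univ.filter fun ω => X ω = a, p ω) *
          (∑ ω ∈ Finset.univ.filter fun ω => Y ω = b, p ω)))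

/-- The conditional probability `P(E_{u,v} = 1 | C = c)` for the unordered pair `s`:
`(1 + (2c-1)/2)/2` for the pair `{a,b}`; `(1 + (2c-1)/4)/2` when exactly one endpoint
lies in `{a,b}` (for a non-diagonal pair `s`, this is `a ∈ s ∨ b ∈ s` but not both);
`1/2` for all other pairs. -/
noncomputable def edgeProb {n : ℕ} (a b : Fin n) (s : Sym2 (Fin n)) (c : Bool) : ℝ :=
  if a ∈ s ∧ b ∈ s then (1 + (if c then (1 : ℝ) else -1) / 2) / 2
  else if a ∈ s ∨ b ∈ s then (1 + (if c then (1 : ℝ) else -1) / 4) / 2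
  else 1 / 2

/-- The joint probability mass function of the family of edge indicators
`(E_{u,v})_{{u,v}, u ≠ v}` together with the class label: `C ~ Bernoulli(1/2)` and,
conditionally on `C = c`, the indicators are independent Bernoulli with success
probabilities `edgeProb a b s c`. -/
noncomputable def jointAB {n : ℕ} (a b : Fin n) :
    ({s : Sym2 (Fin n) // ¬s.IsDiag} → Bool) → Bool → ℝ := fun e c =>
  (1 / 2) * ∏ s : {s : Sym2 (Fin n) // ¬s.IsDiag},
    (if e s then edgeProb a b s.val c else 1 - edgeProb a b s.val c)

/-- The probability mass function on the sample space
`Ω = ({unordered pairs} → Bool) × Bool` of the data distribution. -/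
noncomputable def pAB {n : ℕ} (a b : Fin n) :
    (({s : Sym2 (Fin n) // ¬s.IsDiag} → Bool) × Bool) → ℝ := fun ω =>
  jointAB a b ω.1 ω.2

/-- The mutual information `I(E_{u,v}; C)` of a single edge indicator with the class
label under the data distribution. -/
noncomputable def miEdge {n : ℕ} (a b : Fin n) (s : {s : Sym2 (Fin n) // ¬s.IsDiag}) : ℝ :=
  miRV (pAB a b) (fun ω => ω.1 s) (fun ω => ω.2)

/-- The edge cost function `c(u,v) = g(I(E_{u,v}; C))` (set to `0 = g(0)` on the
irrelevant diagonal). -/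
noncomputable def costAB {n : ℕ} (g : ℝ → ℝ) (a b : Fin n) (u v : Fin n) : ℝ :=
  if h : ¬(s(u, v)).IsDiag then g (miEdge a b ⟨s(u, v), h⟩) else 0

/-- The cost `W(J) = Σ_{u,v} c(u,v)·J(u,v)` of a flow `J` under cost `costAB g a b`. -/
noncomputable def WAB {n : ℕ} (g : ℝ → ℝ) (a b : Fin n) (J : Fin n → Fin n → ℝ) : ℝ :=
  ∑ u : Fin n, ∑ v : Fin n, costAB g a b u v * J u v

/-- The result `ρ1(v) = ρ0(v) + Σ_u (J(u,v) - J(v,u))` of a flow `J` started from the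
uniform distribution `ρ0 = 1/n`. -/
noncomputable def resultUnif {n : ℕ} (J : Fin n → Fin n → ℝ) (v : Fin n) : ℝ :=
  1 / (n : ℝ) + ∑ u : Fin n, (J u v - J v u)

/-- The mutual information `I(H_U; C)` of the summarized graph induced on a vertex
subset `U`, i.e. of the family of edge indicators `(E_{u,v})` with `{u,v} ⊆ U`,
`u ≠ v`, with the class label. -/
noncomputable def miSub {n : ℕ} (a b : Fin n) (U : Finset (Fin n)) : ℝ :=
  miRV (pAB a b)
    (fun ω => fun s : {s : Sym2 (Fin n) // (∀ v ∈ s, v ∈ U) ∧ ¬s.IsDiag} =>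
      ω.1 ⟨s.val, s.prop.2⟩)
    (fun ω => ω.2)


section helpers

lemma sum_total {ι : Type*} [Fintype ι] [DecidableEq ι] (w : ι → Bool → ℝ)
    (hw : ∀ s, w s true + w s false = 1) :
    ∑ e : ι → Bool, ∏ s, w s (e s) = 1 := by
  have h := Finset.prod_univ_sum (fun _ : ι => (Finset.univ : Finset Bool)) (fun s x => w s x)
  rw [Fintype.piFinset_univ] at h
  rw [← h]
  have : ∀ s : ι, ∑ x : Bool, w s x = 1 := by
    intro s; rw [Fintype.sum_bool]; exact hw s
  simp only [this, Finset.prod_const_one]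

lemma sum_fiber {ι : Type*} [Fintype ι] [DecidableEq ι] (w : ι → Bool → ℝ)
    (hw : ∀ s, w s true + w s false = 1) (s0 : ι) (t : Bool) :
    ∑ e ∈ Finset.univ.filter (fun e : ι → Bool => e s0 = t), ∏ s, w s (e s) = w s0 t := by
  set w' : ι → Bool → ℝ := fun s x => if s = s0 then (if x = t then w s x else 0) else w s x with hw'
  have step1 : ∑ e ∈ Finset.univ.filter (fun e : ι → Bool => e s0 = t), ∏ s, w s (e s)
      = ∑ e : ι → Bool, ∏ s, w' s (e s) := by
    rw [Finset.sum_filter]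
    refine Finset.sum_congr rfl fun e _ => ?_
    by_cases h : e s0 = t
    · simp only [h, if_true]
      refine Finset.prod_congr rfl fun s _ => ?_
      by_cases hs : s = s0 <;> simp [hw', hs, h]
    · rw [if_neg h]
      symm
      refine Finset.prod_eq_zero (Finset.mem_univ s0) ?_
      simp [hw', h]
  rw [step1]
  have h := Finset.prod_univ_sum (fun _ : ι => (Finset.univ : Finset Bool)) (fun s x => w' s x)
  rw [Fintype.piFinset_univ] at h
  rw [← h]
  have hval : ∀ s : ι, ∑ x : Bool, w' s x = if s = s0 then w s0 t else 1 := by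
    intro s
    rw [Fintype.sum_bool]
    by_cases hs : s = s0
    · subst hs; cases t <;> simp [hw']
    · simp [hw', hs, hw s]
  calc ∏ s : ι, ∑ x : Bool, w' s x = ∏ s : ι, (if s = s0 then w s0 t else 1) := by
        exact Finset.prod_congr rfl fun s _ => hval s
    _ = w s0 t := by simp [Finset.prod_ite_eq']

variable {n : ℕ} (a b : Fin n) (s0 : {s : Sym2 (Fin n) // ¬s.IsDiag})

lemma marg_XC (t c : Bool) :
    ∑ ω ∈ Finset.univ.filter
        (fun ω : ({s : Sym2 (Fin n) // ¬s.IsDiag} → Bool) × Bool => ω.1 s0 = t ∧ ω.2 = c),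
      pAB a b ω
    = 1/2 * (if t then edgeProb a b s0.val c else 1 - edgeProb a b s0.val c) := by
  rw [Finset.sum_filter, Fintype.sum_prod_type]
  have inner : ∀ e : {s : Sym2 (Fin n) // ¬s.IsDiag} → Bool,
      (∑ c' : Bool, if e s0 = t ∧ c' = c then pAB a b (e, c') else 0)
      = if e s0 = t then jointAB a b e c else 0 := by
    intro e
    by_cases h : e s0 = t
    · simp [h, pAB, Finset.sum_ite_eq']
    · simp [h]
  simp only [inner]
  rw [← Finset.sum_filter]
  show ∑ e ∈ Finset.univ.filter (fun e : {s : Sym2 (Fin n) // ¬s.IsDiag} → Bool => e s0 = t),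
      (1 / 2) * ∏ s, (if e s then edgeProb a b s.val c else 1 - edgeProb a b s.val c) = _
  rw [← Finset.mul_sum]
  rw [sum_fiber (fun s x => if x then edgeProb a b s.val c else 1 - edgeProb a b s.val c)
    (by intro s; simp) s0 t]

lemma marg_C (c : Bool) :
    ∑ ω ∈ Finset.univ.filter
        (fun ω : ({s : Sym2 (Fin n) // ¬s.IsDiag} → Bool) × Bool => ω.2 = c),
      pAB a b ω = 1/2 := by
  rw [Finset.sum_filter, Fintype.sum_prod_type]
  have inner : ∀ e : {s : Sym2 (Fin n) // ¬s.IsDiag} → Bool,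
      (∑ c' : Bool, if c' = c then pAB a b (e, c') else 0) = jointAB a b e c := by
    intro e; simp [pAB, Finset.sum_ite_eq']
  simp only [inner]
  show ∑ e : {s : Sym2 (Fin n) // ¬s.IsDiag} → Bool,
      (1 / 2) * ∏ s, (if e s then edgeProb a b s.val c else 1 - edgeProb a b s.val c) = _
  rw [← Finset.mul_sum]
  rw [sum_total (ι := {s : Sym2 (Fin n) // ¬s.IsDiag})
    (fun s x => if x then edgeProb a b s.val c else 1 - edgeProb a b s.val c)
    (by intro s; simp)]
  norm_num

lemma marg_X (t : Bool) :
    ∑ ω ∈ Finset.univ.filter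
        (fun ω : ({s : Sym2 (Fin n) // ¬s.IsDiag} → Bool) × Bool => ω.1 s0 = t),
      pAB a b ω
    = 1/2 * ((if t then edgeProb a b s0.val true else 1 - edgeProb a b s0.val true)
        + (if t then edgeProb a b s0.val false else 1 - edgeProb a b s0.val false)) := by
  have h : (Finset.univ.filter
        (fun ω : ({s : Sym2 (Fin n) // ¬s.IsDiag} → Bool) × Bool => ω.1 s0 = t))
      = (Finset.univ.filter (fun ω : ({s : Sym2 (Fin n) // ¬s.IsDiag} → Bool) × Bool =>
          ω.1 s0 = t ∧ ω.2 = true))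
        ∪ (Finset.univ.filter (fun ω => ω.1 s0 = t ∧ ω.2 = false)) := by
    ext ω
    simp only [Finset.mem_filter, Finset.mem_union, Finset.mem_univ, true_and]
    cases hc : ω.2 <;> tauto
  rw [h, Finset.sum_union, marg_XC, marg_XC]
  · ring
  · rw [Finset.disjoint_filter]
    rintro ω _ ⟨_, h1⟩ ⟨_, h2⟩
    rw [h1] at h2; exact Bool.noConfusion h2

lemma miEdge_formula (pT pF : ℝ) (hT : edgeProb a b s0.val true = pT)
    (hF : edgeProb a b s0.val false = pF) :
    miEdge a b s0 =
      ((1/2*pT) * Real.log ((1/2*pT) / ((1/2*(pT+pF)) * (1/2)))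
      + (1/2*pF) * Real.log ((1/2*pF) / ((1/2*(pT+pF)) * (1/2))))
      + ((1/2*(1-pT)) * Real.log ((1/2*(1-pT)) / ((1/2*((1-pT)+(1-pF))) * (1/2)))
      + (1/2*(1-pF)) * Real.log ((1/2*(1-pF)) / ((1/2*((1-pT)+(1-pF))) * (1/2)))) := by
  simp only [miEdge, miRV]
  rw [Fintype.sum_bool]
  rw [Fintype.sum_bool, Fintype.sum_bool]
  rw [marg_XC a b s0 true true, marg_XC a b s0 true false,
    marg_XC a b s0 false true, marg_XC a b s0 false false,
    marg_X a b s0 true, marg_X a b s0 false, marg_C a b true, marg_C a b false]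
  rw [hT, hF]
  norm_num

lemma log4 : Real.log (4:ℝ) = 2 * Real.log 2 := by
  rw [show (4:ℝ) = 2^2 by norm_num, Real.log_pow]; push_cast; ring

lemma log8 : Real.log (8:ℝ) = 3 * Real.log 2 := by
  rw [show (8:ℝ) = 2^3 by norm_num, Real.log_pow]; push_cast; ring

lemma miEdge_ab (h1 : a ∈ s0.val) (h2 : b ∈ s0.val) :
    miEdge a b s0 = Real.log 2 - binEntropy (3/4) := by
  rw [miEdge_formula a b s0 (3/4) (1/4)
    (by simp [edgeProb, h1, h2]; norm_num) (by simp [edgeProb, h1, h2]; norm_num)]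
  rw [show ((1:ℝ)/2*(3/4)) / ((1/2*(3/4+1/4)) * (1/2)) = 3/2 by norm_num]
  rw [show ((1:ℝ)/2*(1/4)) / ((1/2*(3/4+1/4)) * (1/2)) = 1/2 by norm_num]
  rw [show ((1:ℝ)/2*(1-3/4)) / ((1/2*((1-3/4)+(1-1/4))) * (1/2)) = 1/2 by norm_num]
  rw [show ((1:ℝ)/2*(1-1/4)) / ((1/2*((1-3/4)+(1-1/4))) * (1/2)) = 3/2 by norm_num]
  have h32 : Real.log ((3:ℝ)/2) = Real.log 3 - Real.log 2 :=
    Real.log_div (by norm_num) (by norm_num)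
  have h12 : Real.log ((1:ℝ)/2) = -Real.log 2 := by
    rw [Real.log_div one_ne_zero (by norm_num), Real.log_one]; ring
  have h34 : Real.log ((3:ℝ)/4) = Real.log 3 - 2*Real.log 2 := by
    rw [Real.log_div (by norm_num) (by norm_num), log4]
  have h14 : Real.log ((1:ℝ)/4) = -(2*Real.log 2) := by
    rw [Real.log_div one_ne_zero (by norm_num), Real.log_one, log4]; ring
  simp only [binEntropy]
  rw [show (1:ℝ) - 3/4 = 1/4 by norm_num, h32, h12, h34, h14]
  ring

lemma miEdge_mixed (h1 : a ∈ s0.val ∨ b ∈ s0.val) (h2 : ¬(a ∈ s0.val ∧ b ∈ s0.val)) :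
    miEdge a b s0 = Real.log 2 - binEntropy (5/8) := by
  rw [miEdge_formula a b s0 (5/8) (3/8)
    (by simp [edgeProb, h1, h2]; norm_num) (by simp [edgeProb, h1, h2]; norm_num)]
  rw [show ((1:ℝ)/2*(5/8)) / ((1/2*(5/8+3/8)) * (1/2)) = 5/4 by norm_num]
  rw [show ((1:ℝ)/2*(3/8)) / ((1/2*(5/8+3/8)) * (1/2)) = 3/4 by norm_num]
  rw [show ((1:ℝ)/2*(1-5/8)) / ((1/2*((1-5/8)+(1-3/8))) * (1/2)) = 3/4 by norm_num]
  rw [show ((1:ℝ)/2*(1-3/8)) / ((1/2*((1-5/8)+(1-3/8))) * (1/2)) = 5/4 by norm_num]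
  have h54 : Real.log ((5:ℝ)/4) = Real.log 5 - 2*Real.log 2 := by
    rw [Real.log_div (by norm_num) (by norm_num), log4]
  have h34 : Real.log ((3:ℝ)/4) = Real.log 3 - 2*Real.log 2 := by
    rw [Real.log_div (by norm_num) (by norm_num), log4]
  have h58 : Real.log ((5:ℝ)/8) = Real.log 5 - 3*Real.log 2 := by
    rw [Real.log_div (by norm_num) (by norm_num), log8]
  have h38 : Real.log ((3:ℝ)/8) = Real.log 3 - 3*Real.log 2 := by
    rw [Real.log_div (by norm_num) (by norm_num), log8]
  simp only [binEntropy]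
  rw [show (1:ℝ) - 5/8 = 3/8 by norm_num, h54, h34, h58, h38]
  ring

lemma miEdge_far (h1 : a ∉ s0.val) (h2 : b ∉ s0.val) :
    miEdge a b s0 = 0 := by
  rw [miEdge_formula a b s0 (1/2) (1/2)
    (by simp [edgeProb, h1, h2]) (by simp [edgeProb, h1, h2])]
  norm_num

lemma m1_pos : 0 < Real.log 2 - binEntropy (3/4) := by
  have h34 : Real.log ((3:ℝ)/4) = Real.log 3 - 2*Real.log 2 := by
    rw [Real.log_div (by norm_num) (by norm_num), log4]
  have h14 : Real.log ((1:ℝ)/4) = -(2*Real.log 2) := by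
    rw [Real.log_div one_ne_zero (by norm_num), Real.log_one, log4]; ring
  have key : 4 * Real.log 2 < 3 * Real.log 3 := by
    have := Real.log_lt_log (x := 16) (by norm_num) (show (16:ℝ) < 27 by norm_num)
    rw [show (16:ℝ) = 2^4 by norm_num, show (27:ℝ) = 3^3 by norm_num,
      Real.log_pow, Real.log_pow] at this
    push_cast at this; linarith
  simp only [binEntropy]
  rw [show (1:ℝ) - 3/4 = 1/4 by norm_num, h34, h14]
  linarith

lemma m2_pos : 0 < Real.log 2 - binEntropy (5/8) := by
  have h58 : Real.log ((5:ℝ)/8) = Real.log 5 - 3*Real.log 2 := by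
    rw [Real.log_div (by norm_num) (by norm_num), log8]
  have h38 : Real.log ((3:ℝ)/8) = Real.log 3 - 3*Real.log 2 := by
    rw [Real.log_div (by norm_num) (by norm_num), log8]
  have key : 16 * Real.log 2 < 5 * Real.log 5 + 3 * Real.log 3 := by
    have := Real.log_lt_log (x := 65536) (by norm_num) (show (65536:ℝ) < 84375 by norm_num)
    rw [show (65536:ℝ) = 2^16 by norm_num, show (84375:ℝ) = 5^5 * 3^3 by norm_num,
      Real.log_mul (by positivity) (by positivity), Real.log_pow, Real.log_pow,
      Real.log_pow] at this
    push_cast at this; linarith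
  simp only [binEntropy]
  rw [show (1:ℝ) - 5/8 = 3/8 by norm_num, h58, h38]
  linarith

lemma miSub_pair (u v : Fin n) (hd : ¬ (s(u,v)).IsDiag) :
    miSub a b ({u, v} : Finset (Fin n)) = miEdge a b ⟨s(u,v), hd⟩ := by
  classical
  have hmemall : ∀ x ∈ s(u,v), x ∈ ({u,v} : Finset (Fin n)) := by
    intro x hx
    rw [Sym2.mem_iff] at hx
    rcases hx with h | h <;> simp [h]
  set ι' := {s : Sym2 (Fin n) // (∀ x ∈ s, x ∈ ({u,v} : Finset (Fin n))) ∧ ¬s.IsDiag} with hι'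
  have huniq : ∀ s' : ι', s'.val = s(u,v) := by
    rintro ⟨s, hs, hsd⟩
    induction s using Sym2.ind with
    | _ x y =>
      have hx := hs x (by simp)
      have hy := hs y (by simp)
      simp only [Finset.mem_insert, Finset.mem_singleton] at hx hy
      have hxy : x ≠ y := by simpa [Sym2.mk_isDiag_iff] using hsd
      show s(x,y) = s(u,v)
      rcases hx with hx | hx <;> rcases hy with hy | hy
      · exact absurd (hx.trans hy.symm) hxy
      · rw [hx, hy]
      · rw [hx, hy]; exact Sym2.eq_swap
      · exact absurd (hx.trans hy.symm) hxy
  letI : Unique ι' :=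
    { default := ⟨s(u,v), hmemall, hd⟩
      uniq := fun s' => Subtype.ext (huniq s') }
  have hval : ∀ s' : ι', (⟨s'.val, s'.prop.2⟩ : {s : Sym2 (Fin n) // ¬s.IsDiag})
      = ⟨s(u,v), hd⟩ := fun s' => Subtype.ext (huniq s')
  have hXeq : ∀ (ω : (({s : Sym2 (Fin n) // ¬s.IsDiag} → Bool) × Bool)) (f : ι' → Bool),
      ((fun s' : ι' => ω.1 ⟨s'.val, s'.prop.2⟩) = f) ↔ ω.1 ⟨s(u,v), hd⟩ = f default := by
    intro ω f
    constructor
    · intro h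
      rw [← h]
      exact (congrArg ω.1 (hval default)).symm
    · intro h
      funext s'
      show ω.1 ⟨s'.val, s'.prop.2⟩ = f s'
      rw [Unique.eq_default s']
      exact (congrArg ω.1 (hval default)).trans h
  simp only [miSub, miEdge, miRV]
  refine Fintype.sum_equiv (Equiv.funUnique ι' Bool) _ _ (fun f => ?_)
  refine Finset.sum_congr rfl fun c _ => ?_
  simp only [Equiv.funUnique_apply]
  have e1 : (Finset.univ.filter
        fun ω : (({s : Sym2 (Fin n) // ¬s.IsDiag} → Bool) × Bool) =>
          (fun s' : ι' => ω.1 ⟨s'.val, s'.prop.2⟩) = f ∧ ω.2 = c)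
      = (Finset.univ.filter fun ω => ω.1 ⟨s(u,v), hd⟩ = f default ∧ ω.2 = c) := by
    apply Finset.filter_congr
    intro ω _
    rw [hXeq ω f]
  have e2 : (Finset.univ.filter
        fun ω : (({s : Sym2 (Fin n) // ¬s.IsDiag} → Bool) × Bool) =>
          (fun s' : ι' => ω.1 ⟨s'.val, s'.prop.2⟩) = f)
      = (Finset.univ.filter fun ω => ω.1 ⟨s(u,v), hd⟩ = f default) := by
    apply Finset.filter_congr
    intro ω _
    exact hXeq ω f
  rw [e1, e2]

lemma costAB_mixed (g : ℝ → ℝ) (x y : Fin n) (hxy : x ≠ y)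
    (h1 : a ∈ s(x,y) ∨ b ∈ s(x,y)) (h2 : ¬(a ∈ s(x,y) ∧ b ∈ s(x,y))) :
    costAB g a b x y = g (Real.log 2 - binEntropy (5/8)) := by
  have hd : ¬ (s(x,y)).IsDiag := by simp [Sym2.mk_isDiag_iff, hxy]
  simp only [costAB]
  rw [dif_pos hd, miEdge_mixed a b _ h1 h2]

lemma costAB_far (g : ℝ → ℝ) (hg0 : g 0 = 0) (x y : Fin n)
    (h1 : a ∉ s(x,y)) (h2 : b ∉ s(x,y)) :
    costAB g a b x y = 0 := by
  simp only [costAB]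
  by_cases hd : ¬ (s(x,y)).IsDiag
  · rw [dif_pos hd, miEdge_far a b _ h1 h2, hg0]
  · rw [dif_neg hd]

lemma costAB_nonneg (g : ℝ → ℝ) (hgnonneg : ∀ x : ℝ, 0 ≤ x → 0 ≤ g x) (x y : Fin n) :
    0 ≤ costAB g a b x y := by
  simp only [costAB]
  by_cases hd : ¬ (s(x,y)).IsDiag
  · rw [dif_pos hd]
    apply hgnonneg
    by_cases h1 : a ∈ s(x,y) <;> by_cases h2 : b ∈ s(x,y)
    · rw [miEdge_ab a b _ h1 h2]; exact m1_pos.le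
    · rw [miEdge_mixed a b _ (Or.inl h1) (by tauto)]; exact m2_pos.le
    · rw [miEdge_mixed a b _ (Or.inr h2) (by tauto)]; exact m2_pos.le
    · rw [miEdge_far a b _ h1 h2]
  · rw [dif_neg hd]

/-- result of the "push everything into `S` along `τ`" flow vanishes outside `S`. -/
lemma flow_result (S : Finset (Fin n)) (τ : Fin n → Fin n) (hτ : ∀ x, τ x ∈ S)
    (v : Fin n) (hv : v ∉ S) :
    resultUnif (fun x y => if x ∉ S ∧ y = τ x then 1/(n:ℝ) else 0) v = 0 := by
  classical
  simp only [resultUnif]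
  rw [Finset.sum_sub_distrib]
  have h1 : ∑ u : Fin n, (if u ∉ S ∧ v = τ u then 1/(n:ℝ) else 0) = 0 := by
    apply Finset.sum_eq_zero
    intro u _
    rw [if_neg]
    rintro ⟨-, rfl⟩
    exact hv (hτ u)
  have h2 : ∑ u : Fin n, (if v ∉ S ∧ u = τ v then 1/(n:ℝ) else 0) = 1/(n:ℝ) := by
    have : ∀ u : Fin n, (if v ∉ S ∧ u = τ v then 1/(n:ℝ) else 0)
        = (if u = τ v then 1/(n:ℝ) else 0) := by
      intro u
      by_cases h : u = τ v <;> simp [h, hv]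
    rw [Finset.sum_congr rfl fun u _ => this u]
    simp [Finset.sum_ite_eq']
  rw [h1, h2]
  ring

/-- cut lower bound: any flow supported on `{a,b}` costs at least `(n-2)/n · g(m2)`. -/
lemma flow_lower_bound (hab : a ≠ b) (hn : 2 ≤ n) (g : ℝ → ℝ)
    (hgnonneg : ∀ x : ℝ, 0 ≤ x → 0 ≤ g x)
    (J : Fin n → Fin n → ℝ) (hJ : ∀ u v, 0 ≤ J u v)
    (hsupp : ∀ v, v ∉ ({a, b} : Finset (Fin n)) → resultUnif J v = 0) :
    ((n : ℝ) - 2) / n * g (Real.log 2 - binEntropy (5 / 8)) ≤ WAB g a b J := by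
  classical
  set A : Finset (Fin n) := {a, b} with hA
  set T : Finset (Fin n) := Aᶜ with hT
  set G : ℝ := g (Real.log 2 - binEntropy (5 / 8)) with hG
  have hnpos : (0:ℝ) < n := by
    have : 0 < n := by omega
    exact_mod_cast this
  have hcardA : A.card = 2 := by
    rw [hA, Finset.card_insert_of_notMem (by simp [hab]), Finset.card_singleton]
  have hcardT : (T.card : ℝ) = (n : ℝ) - 2 := by
    rw [hT, Finset.card_compl, hcardA]
    have : (2:ℕ) ≤ Fintype.card (Fin n) := by simp [hn]
    push_cast [Nat.cast_sub this]
    simp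
  have hrow : ∀ v ∈ T, ∑ u : Fin n, (J v u - J u v) = 1/(n:ℝ) := by
    intro v hv
    have h0 := hsupp v (by simpa [hT, Finset.mem_compl] using hv)
    simp only [resultUnif] at h0
    rw [Finset.sum_sub_distrib] at h0 ⊢
    linarith
  have hcut : ∑ v ∈ T, ∑ u ∈ A, (J v u - J u v) = (T.card : ℝ) / n := by
    have h1 : ∑ v ∈ T, ∑ u : Fin n, (J v u - J u v) = (T.card : ℝ) / n := by
      rw [Finset.sum_congr rfl hrow, Finset.sum_const, nsmul_eq_mul]
      ring
    have h2 : ∀ v ∈ T, ∑ u : Fin n, (J v u - J u v)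
        = ∑ u ∈ A, (J v u - J u v) + ∑ u ∈ T, (J v u - J u v) := by
      intro v _
      rw [hT]
      exact (Finset.sum_add_sum_compl A _).symm
    rw [Finset.sum_congr rfl h2, Finset.sum_add_distrib] at h1
    have h3 : ∑ v ∈ T, ∑ u ∈ T, (J v u - J u v) = 0 := by
      simp only [Finset.sum_sub_distrib]
      rw [Finset.sum_comm]
      ring
    rw [h3] at h1
    linarith
  have hJcut : (T.card : ℝ) / n ≤ ∑ v ∈ T, ∑ u ∈ A, J v u := by
    have hle : ∑ v ∈ T, ∑ u ∈ A, (J v u - J u v) ≤ ∑ v ∈ T, ∑ u ∈ A, J v u := by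
      refine Finset.sum_le_sum fun v _ => Finset.sum_le_sum fun u _ => ?_
      have := hJ u v
      linarith
    linarith [hcut]
  have hcost : ∀ v ∈ T, ∀ u ∈ A, costAB g a b v u = G := by
    intro v hv u hu
    have hva : v ≠ a := by
      intro h; rw [hT, Finset.mem_compl, hA] at hv; simp [h] at hv
    have hvb : v ≠ b := by
      intro h; rw [hT, Finset.mem_compl, hA] at hv; simp [h] at hv
    rw [hA, Finset.mem_insert, Finset.mem_singleton] at hu
    have hvu : v ≠ u := by rcases hu with rfl | rfl <;> assumption
    apply costAB_mixed a b g v u hvu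
    · rcases hu with rfl | rfl
      · left; rw [Sym2.mem_iff]; right; rfl
      · right; rw [Sym2.mem_iff]; right; rfl
    · rintro ⟨hA', hB'⟩
      rw [Sym2.mem_iff] at hA' hB'
      rcases hu with rfl | rfl
      · rcases hB' with h | h
        · exact hvb h.symm
        · exact hab h.symm
      · rcases hA' with h | h
        · exact hva h.symm
        · exact hab h
  have hGnn : 0 ≤ G := hgnonneg _ m2_pos.le
  have hsub : ∑ v ∈ T, ∑ u ∈ A, costAB g a b v u * J v u ≤ WAB g a b J := by
    rw [WAB, ← Finset.sum_product', ← Finset.sum_product']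
    apply Finset.sum_le_sum_of_subset_of_nonneg
    · intro p _
      simp
    · intro p _ _
      exact mul_nonneg (costAB_nonneg a b g hgnonneg _ _) (hJ _ _)
  have heq : ∑ v ∈ T, ∑ u ∈ A, costAB g a b v u * J v u
      = G * ∑ v ∈ T, ∑ u ∈ A, J v u := by
    rw [Finset.mul_sum]
    refine Finset.sum_congr rfl fun v hv => ?_
    rw [Finset.mul_sum]
    exact Finset.sum_congr rfl fun u hu => by rw [hcost v hv u hu]
  have : ((n:ℝ) - 2) / n * G ≤ G * ∑ v ∈ T, ∑ u ∈ A, J v u := by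
    rw [← hcardT]
    calc (T.card : ℝ) / n * G = G * ((T.card : ℝ) / n) := by ring
      _ ≤ G * ∑ v ∈ T, ∑ u ∈ A, J v u := mul_le_mul_of_nonneg_left hJcut hGnn
  calc ((n:ℝ) - 2) / n * G ≤ G * ∑ v ∈ T, ∑ u ∈ A, J v u := this
    _ = ∑ v ∈ T, ∑ u ∈ A, costAB g a b v u * J v u := heq.symm
    _ ≤ WAB g a b J := hsub

/-- cost of the "push to τ" flow. -/
lemma flow_cost (g : ℝ → ℝ) (S : Finset (Fin n)) (τ : Fin n → Fin n)
    (F : Fin n → Fin n → ℝ)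
    (hF : F = fun x y => if x ∉ S ∧ y = τ x then 1/(n:ℝ) else 0) :
    WAB g a b F = ∑ x ∈ Finset.univ.filter (fun x => x ∉ S),
      costAB g a b x (τ x) * (1/(n:ℝ)) := by
  classical
  rw [WAB]
  have inner : ∀ x : Fin n, ∑ y : Fin n, costAB g a b x y * F x y
      = if x ∉ S then costAB g a b x (τ x) * (1/(n:ℝ)) else 0 := by
    intro x
    by_cases hx : x ∉ S
    · rw [if_pos hx]
      have : ∀ y : Fin n, costAB g a b x y * F x y
          = if y = τ x then costAB g a b x y * (1/(n:ℝ)) else 0 := by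
        intro y
        rw [hF]
        by_cases h : y = τ x <;> simp [h, hx]
      rw [Finset.sum_congr rfl fun y _ => this y]
      simp [Finset.sum_ite_eq']
    · rw [if_neg hx]
      apply Finset.sum_eq_zero
      intro y _
      rw [hF]
      simp only []
      rw [if_neg (by tauto), mul_zero]
  rw [Finset.sum_congr rfl fun x _ => inner x, ← Finset.sum_filter]

end helpers

/-- Theorem 2 (information monotonicity violations in the OTC approach), explicit
construction: for every `n > 4` and every strictly increasing `g : ℝ → ℝ` with
`g(0) = 0`, `g` nonnegative on `[0,∞)`, distinguishing the first two vertices `a, b`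
of `V = Fin n` and taking the data distribution, edge costs `c(u,v) = g(I(E_{u,v};C))`
and uniform `ρ0` described above:
(i) `I(E_{a,b}; C) = log 2 - h(3/4) > 0`, while pairs disjoint from `{a,b}` carry zero
information; (ii) there are a 2-element set `S0` disjoint from `{a,b}` and a flow `J0 ≥ 0`
whose result is supported on `S0` with `W(J0) ≤ (2/n)·g(log 2 - h(5/8))`; (iii) every
flow whose result is supported on `{a,b}` has cost `≥ ((n-2)/n)·g(log 2 - h(5/8))`,
which is strictly bigger than `(2/n)·g(log 2 - h(5/8))`.  Consequently there are flows
`f0, f1` with results supported on `S0` and `{a,b}` respectively such that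
`W(f0) < W(f1)` while `I(H_{S0}; C) = 0 < I(H_{{a,b}}; C)`: the parameter pair is not
information monotone for this data distribution. -/

theorem stmt11 (n : ℕ) (hn : 4 < n) (g : ℝ → ℝ) (hg : StrictMono g) (hg0 : g 0 = 0)
    (hgnonneg : ∀ x : ℝ, 0 ≤ x → 0 ≤ g x)
    (a b : Fin n) (ha : (a : ℕ) = 0) (hb : (b : ℕ) = 1) :
    -- (i)
    ((∀ s : {s : Sym2 (Fin n) // ¬s.IsDiag}, a ∈ s.val → b ∈ s.val →
        miEdge a b s = Real.log 2 - binEntropy (3 / 4)) ∧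
      0 < Real.log 2 - binEntropy (3 / 4) ∧
      (∀ s : {s : Sym2 (Fin n) // ¬s.IsDiag}, a ∉ s.val → b ∉ s.val →
        miEdge a b s = 0)) ∧
    -- (ii)
    (∃ S0 : Finset (Fin n), S0.card = 2 ∧ a ∉ S0 ∧ b ∉ S0 ∧
      ∃ J0 : Fin n → Fin n → ℝ, (∀ u v, 0 ≤ J0 u v) ∧
        (∀ v ∉ S0, resultUnif J0 v = 0) ∧
        WAB g a b J0 ≤ 2 / (n : ℝ) * g (Real.log 2 - binEntropy (5 / 8))) ∧
    -- (iii)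
    ((∀ J : Fin n → Fin n → ℝ, (∀ u v, 0 ≤ J u v) →
        (∀ v, v ∉ ({a, b} : Finset (Fin n)) → resultUnif J v = 0) →
        ((n : ℝ) - 2) / n * g (Real.log 2 - binEntropy (5 / 8)) ≤ WAB g a b J) ∧
      2 / (n : ℝ) * g (Real.log 2 - binEntropy (5 / 8)) <
        ((n : ℝ) - 2) / n * g (Real.log 2 - binEntropy (5 / 8))) ∧
    -- consequence: failure of information monotonicity
    (∃ S0 : Finset (Fin n), S0.card = 2 ∧ a ∉ S0 ∧ b ∉ S0 ∧
      ∃ f0 f1 : Fin n → Fin n → ℝ,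
        (∀ u v, 0 ≤ f0 u v) ∧ (∀ u v, 0 ≤ f1 u v) ∧
        (∀ v ∉ S0, resultUnif f0 v = 0) ∧
        (∀ v ∉ ({a, b} : Finset (Fin n)), resultUnif f1 v = 0) ∧
        WAB g a b f0 < WAB g a b f1 ∧
        miSub a b S0 = 0 ∧ 0 < miSub a b ({a, b} : Finset (Fin n))) := by
  classical
  have hab : a ≠ b := by
    intro h; rw [h, hb] at ha; exact absurd ha (by norm_num)
  have hnpos : (0:ℝ) < n := by
    have : 0 < n := by omega
    exact_mod_cast this
  set m2 : ℝ := Real.log 2 - binEntropy (5/8) with hm2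
  have hGpos : 0 < g m2 := by
    have := hg m2_pos
    rwa [hg0] at this
  -- the two auxiliary vertices
  set c0 : Fin n := ⟨2, by omega⟩ with hc0
  set d0 : Fin n := ⟨3, by omega⟩ with hd0
  have hvals : (a:ℕ) = 0 ∧ (b:ℕ) = 1 ∧ (c0:ℕ) = 2 ∧ (d0:ℕ) = 3 := ⟨ha, hb, rfl, rfl⟩
  have hac0 : a ≠ c0 := fun h => by have := congrArg Fin.val h; omega
  have had0 : a ≠ d0 := fun h => by have := congrArg Fin.val h; omega
  have hbc0 : b ≠ c0 := fun h => by have := congrArg Fin.val h; omega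
  have hbd0 : b ≠ d0 := fun h => by have := congrArg Fin.val h; omega
  have hc0d0 : c0 ≠ d0 := fun h => by have := congrArg Fin.val h; omega
  set S0 : Finset (Fin n) := {c0, d0} with hS0
  have hS0card : S0.card = 2 := by
    rw [hS0, Finset.card_insert_of_notMem (by simp [hc0d0]), Finset.card_singleton]
  have haS0 : a ∉ S0 := by simp [hS0, hac0, had0]
  have hbS0 : b ∉ S0 := by simp [hS0, hbc0, hbd0]
  -- the flow into S0
  set τ0 : Fin n → Fin n := fun x => if x = b then d0 else c0 with hτ0
  have hτ0S : ∀ x, τ0 x ∈ S0 := by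
    intro x
    rw [hτ0, hS0]
    by_cases h : x = b <;> simp [h]
  set J0 : Fin n → Fin n → ℝ := fun x y => if x ∉ S0 ∧ y = τ0 x then 1/(n:ℝ) else 0 with hJ0
  have hJ0nn : ∀ u v, 0 ≤ J0 u v := by
    intro u v; rw [hJ0]; dsimp only
    split_ifs
    · positivity
    · exact le_refl 0
  have hJ0res : ∀ v ∉ S0, resultUnif J0 v = 0 := fun v hv =>
    flow_result S0 τ0 hτ0S v hv
  have hJ0cost : WAB g a b J0 = 2 / (n:ℝ) * g m2 := by
    rw [flow_cost a b g S0 τ0 J0 hJ0]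
    have hset : Finset.univ.filter (fun x : Fin n => x ∉ S0)
        = Finset.univ.filter (fun x : Fin n => x ∉ S0) := rfl
    have hzero : ∀ x ∈ Finset.univ.filter (fun x : Fin n => x ∉ S0), x ∉ ({a,b} : Finset (Fin n)) →
        costAB g a b x (τ0 x) * (1/(n:ℝ)) = 0 := by
      intro x hx hxab
      have hxa : x ≠ a := by intro h; apply hxab; simp [h]
      have hxb : x ≠ b := by intro h; apply hxab; simp [h]
      have hxS0 : x ∉ S0 := (Finset.mem_filter.mp hx).2
      have hτmem : τ0 x ∈ S0 := hτ0S x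
      have hna : a ∉ s(x, τ0 x) := by
        rw [Sym2.mem_iff]
        rintro (h | h)
        · exact hxa h.symm
        · rw [← h] at hτmem; exact haS0 hτmem
      have hnb : b ∉ s(x, τ0 x) := by
        rw [Sym2.mem_iff]
        rintro (h | h)
        · exact hxb h.symm
        · rw [← h] at hτmem; exact hbS0 hτmem
      rw [costAB_far a b g hg0 x (τ0 x) hna hnb, zero_mul]
    have hsubset : ({a, b} : Finset (Fin n)) ⊆ Finset.univ.filter (fun x : Fin n => x ∉ S0) := by
      intro x hx
      rw [Finset.mem_insert, Finset.mem_singleton] at hx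
      rcases hx with rfl | rfl
      · simp [haS0]
      · simp [hbS0]
    rw [← Finset.sum_subset hsubset (fun x hx hx' => hzero x hx hx')]
    rw [Finset.sum_pair hab]
    have hca : costAB g a b a (τ0 a) = g m2 := by
      have hτa : τ0 a = c0 := by rw [hτ0]; simp [hab]
      rw [hτa]
      apply costAB_mixed a b g a c0 hac0
      · left; rw [Sym2.mem_iff]; left; rfl
      · rintro ⟨-, hB⟩
        rw [Sym2.mem_iff] at hB
        rcases hB with h | h
        · exact hab h.symm
        · exact hbc0 h
    have hcb : costAB g a b b (τ0 b) = g m2 := by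
      have hτb : τ0 b = d0 := by rw [hτ0]; simp
      rw [hτb]
      apply costAB_mixed a b g b d0 hbd0
      · right; rw [Sym2.mem_iff]; left; rfl
      · rintro ⟨hA, -⟩
        rw [Sym2.mem_iff] at hA
        rcases hA with h | h
        · exact hab h
        · exact had0 h
    rw [hca, hcb]
    ring
  -- flow into {a,b}
  set τ1 : Fin n → Fin n := fun _ => a with hτ1
  set J1 : Fin n → Fin n → ℝ :=
    fun x y => if x ∉ ({a,b} : Finset (Fin n)) ∧ y = τ1 x then 1/(n:ℝ) else 0 with hJ1
  have hJ1nn : ∀ u v, 0 ≤ J1 u v := by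
    intro u v; rw [hJ1]; dsimp only
    split_ifs
    · positivity
    · exact le_refl 0
  have hJ1res : ∀ v ∉ ({a,b} : Finset (Fin n)), resultUnif J1 v = 0 := fun v hv =>
    flow_result ({a,b} : Finset (Fin n)) τ1 (fun x => by simp [hτ1]) v hv
  have hstrict : 2 / (n:ℝ) * g m2 < ((n:ℝ) - 2) / n * g m2 := by
    have h1 : (2:ℝ) < (n:ℝ) - 2 := by
      have : (5:ℝ) ≤ n := by exact_mod_cast (by omega : 5 ≤ n)
      linarith
    have h2 : 2 / (n:ℝ) < ((n:ℝ) - 2) / n := by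
      rw [div_lt_div_iff₀ hnpos hnpos]
      nlinarith
    exact mul_lt_mul_of_pos_right h2 hGpos
  have hd01 : ¬ (s(c0,d0)).IsDiag := by simp [Sym2.mk_isDiag_iff, hc0d0]
  have hdab : ¬ (s(a,b)).IsDiag := by simp [Sym2.mk_isDiag_iff, hab]
  have hlower := flow_lower_bound a b hab (by omega) g hgnonneg
  refine ⟨⟨fun s hA hB => miEdge_ab a b s hA hB, m1_pos,
      fun s hA hB => miEdge_far a b s hA hB⟩,
    ⟨S0, hS0card, haS0, hbS0, J0, hJ0nn, hJ0res, le_of_eq hJ0cost⟩,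
    ⟨fun J hJ hs => hlower J hJ hs, hstrict⟩,
    S0, hS0card, haS0, hbS0, J0, J1, hJ0nn, hJ1nn, hJ0res, hJ1res, ?_, ?_, ?_⟩
  · calc WAB g a b J0 = 2 / (n:ℝ) * g m2 := hJ0cost
      _ < ((n:ℝ) - 2) / n * g m2 := hstrict
      _ ≤ WAB g a b J1 := hlower J1 hJ1nn hJ1res
  · rw [hS0, miSub_pair a b c0 d0 hd01]
    apply miEdge_far a b _
    · rw [Sym2.mem_iff]
      rintro (h | h)
      · exact hac0 h
      · exact had0 h
    · rw [Sym2.mem_iff]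
      rintro (h | h)
      · exact hbc0 h
      · exact hbd0 h
  · rw [miSub_pair a b a b hdab,
      miEdge_ab a b _ (by rw [Sym2.mem_iff]; left; rfl) (by rw [Sym2.mem_iff]; right; rfl)]
    exact m1_pos
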